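/- The subgroup K = {f_α : α ∈ Sym([n]), α(1)=1, α(2)=2} of Aut(L(n)) has exactly seven orbits on the vertices of L(n): O_1 = {[1,12]}, O_2 = {[1,1i] : 3 ≤ i ≤ n}, O_3 = {[2,12]}, O_4 = {[2,2i] : 3 ≤ i ≤ n}, O_5 = {[i,1i] : 3 ≤ i ≤ n}, O_6 = {[i,2i] : 3 ≤ i ≤ n}, O_7 = {[i,ij] : 3 ≤ i,j ≤ n, i ≠ j}. -/

import Mathlib

set_option linter.unusedVariables false

open SimpleGraph Finset

/-- Vertices of `H(n)`: subsets of `[n]` of size 1 or 2. -/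
def HV (n : ℕ) := {s : Finset (Fin n) // s.card = 1 ∨ s.card = 2}

instance (n : ℕ) : DecidableEq (HV n) := Subtype.instDecidableEq
instance (n : ℕ) : Fintype (HV n) := Subtype.fintype _

/-- The graph `H(n)`: adjacency is strict inclusion. -/
def Hgraph (n : ℕ) : SimpleGraph (HV n) where
  Adj x y := x.1 ⊂ y.1 ∨ y.1 ⊂ x.1
  symm := ⟨fun x y h => h.symm⟩
  loopless := ⟨fun x h => (ssubset_irrefl x.1) (h.elim id id)⟩

instance (n : ℕ) : DecidableRel (Hgraph n).Adj :=
  fun x y => inferInstanceAs (Decidable (_ ∨ _))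

noncomputable instance (n : ℕ) : DecidableRel ((Hgraph n).lineGraph).Adj :=
  Classical.decRel _

def Hv1 {n : ℕ} (i : Fin n) : HV n := ⟨{i}, Or.inl (Finset.card_singleton i)⟩

def Hv2 {n : ℕ} (i j : Fin n) (h : i ≠ j) : HV n := ⟨{i, j}, Or.inr (Finset.card_pair h)⟩

lemma Hadj12 {n : ℕ} (i j : Fin n) (h : i ≠ j) : (Hgraph n).Adj (Hv1 i) (Hv2 i j h) :=
  Or.inl (Finset.ssubset_iff_subset_ne.mpr ⟨by simp [Hv1, Hv2, Finset.singleton_subset_iff], by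
    simp only [Hv1, Hv2]
    intro he
    apply h
    have : j ∈ ({i} : Finset (Fin n)) := by rw [he]; simp
    simpa [eq_comm] using this⟩)

/-- The vertex `[i, ij]` of the line graph `L(n)`, i.e. the edge `{{i},{i,j}}` of `H(n)`. -/
def edgeV {n : ℕ} (i j : Fin n) (h : i ≠ j) : (Hgraph n).edgeSet :=
  ⟨s(Hv1 i, Hv2 i j h), (Hgraph n).mem_edgeSet.mpr (Hadj12 i j h)⟩

def permMap {n : ℕ} (α : Equiv.Perm (Fin n)) (s : HV n) : HV n :=
  ⟨s.1.image α, by rw [Finset.card_image_of_injective _ α.injective]; exact s.2⟩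

def permHom {n : ℕ} (α : Equiv.Perm (Fin n)) : Hgraph n →g Hgraph n where
  toFun := permMap α
  map_rel' := by
    intro x y hxy
    rcases hxy with h | h
    · exact Or.inl ((Finset.image_ssubset_image α.injective).mpr h)
    · exact Or.inr ((Finset.image_ssubset_image α.injective).mpr h)

/-- The map induced by a permutation `α` of `[n]` on the vertices of the line graph `L(n)`. -/
def permEdge {n : ℕ} (α : Equiv.Perm (Fin n)) :
    (Hgraph n).edgeSet → (Hgraph n).edgeSet :=
  (permHom α).mapEdgeSet

/-!
Every vertex of `L(n)` is `[i, ij]` for a unique ordered pair `i ≠ j`, and `f_α` acts on these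
pairs coordinatewise. Since `α` fixes `1` and `2`, it preserves which of `i`, `j` equal `1` or
`2`, and these incidences sort the pairs into exactly the seven listed classes. Conversely, two
pairs in the same class agree at every coordinate lying in `{1, 2}`, and at most two
transpositions, neither touching `1` or `2`, carry one to the other.
-/

lemma Hv1_injective {n : ℕ} : Function.Injective (Hv1 : Fin n → HV n) :=
  fun _ _ h => Finset.singleton_injective (congrArg Subtype.val h)

lemma Hv1_ne_Hv2 {n : ℕ} (i a b : Fin n) (h : a ≠ b) : Hv1 i ≠ Hv2 a b h := fun e => by
  simpa [Hv1, Hv2, card_pair h] using congrArg (fun s : HV n => s.1.card) e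

lemma edgeV_eq_edgeV_iff {n : ℕ} {a b a' b' : Fin n} {h : a ≠ b} {h' : a' ≠ b'} :
    edgeV a b h = edgeV a' b' h' ↔ a = a' ∧ b = b' := by
  refine ⟨fun he => ?_, fun ⟨ha, hb⟩ => by subst ha hb; rfl⟩
  rcases Sym2.eq_iff.mp (congrArg Subtype.val he) with ⟨h1, h2⟩ | ⟨h1, -⟩
  · obtain rfl := Hv1_injective h1
    have hb : b ∈ ({a, b'} : Finset (Fin n)) := by
      rw [← show ({a, b} : Finset (Fin n)) = {a, b'} from congrArg Subtype.val h2]; simp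
    simpa [h.symm] using hb
  · exact absurd h1 (Hv1_ne_Hv2 _ _ _ _)

lemma exists_eq_Hv1_Hv2_of_ssubset {n : ℕ} {x y : HV n} (hxy : x.1 ⊂ y.1) :
    ∃ i j, ∃ h : i ≠ j, x = Hv1 i ∧ y = Hv2 i j h := by
  have hcard : x.1.card = 1 ∧ y.1.card = 2 := by
    have := card_lt_card hxy
    rcases x.2 with hx | hx <;> rcases y.2 with hy | hy <;> omega
  obtain ⟨i, hx⟩ := card_eq_one.mp hcard.1
  obtain ⟨a, b, hab, hy⟩ := card_eq_two.mp hcard.2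
  have hi : i ∈ ({a, b} : Finset (Fin n)) := hy ▸ hxy.subset (by simp [hx])
  rcases mem_insert.mp hi with rfl | hi
  · exact ⟨i, b, hab, Subtype.ext hx, Subtype.ext hy⟩
  · obtain rfl := mem_singleton.mp hi
    exact ⟨i, a, hab.symm, Subtype.ext hx, Subtype.ext (hy.trans (pair_comm _ _))⟩

lemma exists_eq_edgeV {n : ℕ} (e : (Hgraph n).edgeSet) : ∃ i j, ∃ h : i ≠ j, e = edgeV i j h := by
  obtain ⟨s, hs⟩ := e
  induction s using Sym2.ind with
  | _ x y =>
    rcases hs with hxy | hyx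
    · obtain ⟨i, j, h, rfl, rfl⟩ := exists_eq_Hv1_Hv2_of_ssubset hxy
      exact ⟨i, j, h, rfl⟩
    · obtain ⟨i, j, h, rfl, rfl⟩ := exists_eq_Hv1_Hv2_of_ssubset hyx
      exact ⟨i, j, h, Subtype.ext Sym2.eq_swap⟩

lemma permEdge_edgeV {n : ℕ} (α : Equiv.Perm (Fin n)) (i j : Fin n) (h : i ≠ j) :
    permEdge α (edgeV i j h) = edgeV (α i) (α j) (α.injective.ne h) := by
  apply Subtype.ext
  change Sym2.map (permMap α) s(Hv1 i, Hv2 i j h) = _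
  rw [Sym2.map_mk]
  congr 2
  exact Subtype.ext (by simp [permMap, Hv2])

lemma Equiv.swap_apply_of_mem {α : Type*} [DecidableEq α] {S : Set α} {a b x : α}
    (hab : a ∈ S ∨ b ∈ S → a = b) (hx : x ∈ S) : Equiv.swap a b x = x := by
  by_cases h : a = b
  · rw [h, Equiv.swap_self, Equiv.refl_apply]
  · exact Equiv.swap_apply_of_ne_of_ne (fun e => h (hab (.inl (e ▸ hx))))
      (fun e => h (hab (.inr (e ▸ hx))))

lemma exists_perm_fixing_apply_pair {α : Type*} [DecidableEq α] {S : Set α} {i j i' j' : α}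
    (hij : i ≠ j) (hij' : i' ≠ j') (hi : i ∈ S ∨ i' ∈ S → i = i')
    (hj : j ∈ S ∨ j' ∈ S → j = j') :
    ∃ σ : Equiv.Perm α, (∀ x ∈ S, σ x = x) ∧ σ i = i' ∧ σ j = j' := by
  set σ := Equiv.swap i i'
  have hσS : ∀ x ∈ S, σ x = x := fun x hx => Equiv.swap_apply_of_mem hi hx
  have hσj : σ j ∈ S ∨ j' ∈ S → σ j = j' := by
    rintro (h | h)
    · have hjS : j = σ j := σ.injective (by rw [hσS _ h])
      rw [← hj (.inl (hjS ▸ h)), ← hjS]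
    · rw [← hj (.inr h), hσS _ (hj (.inr h) ▸ h)]
  have hσi : σ i = i' := Equiv.swap_apply_left i i'
  refine ⟨Equiv.swap (σ j) j' * σ, fun x hx => ?_, ?_, Equiv.swap_apply_left _ _⟩
  · rw [Equiv.Perm.mul_apply, hσS x hx, Equiv.swap_apply_of_mem hσj hx]
  · rw [Equiv.Perm.mul_apply, hσi]
    exact Equiv.swap_apply_of_ne_of_ne (hσi ▸ σ.injective.ne hij) hij'

section Orbits

variable {n : ℕ} (x1 x2 : Fin n)

def pairClass (i j : Fin n) : Fin 7 :=
  if i = x1 then (if j = x2 then 0 else 1)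
  else if i = x2 then (if j = x1 then 2 else 3)
  else if j = x1 then 4
  else if j = x2 then 5
  else 6

lemma pairClass_perm_apply {α : Equiv.Perm (Fin n)} (h1 : α x1 = x1) (h2 : α x2 = x2) (i j : Fin n) :
    pairClass x1 x2 (α i) (α j) = pairClass x1 x2 i j := by
  simp only [pairClass, α.injective.eq_iff' h1, α.injective.eq_iff' h2]

variable {x1 x2}

lemma eq_of_mem_of_pairClass_eq {i j i' j' : Fin n} (hij : i ≠ j) (hij' : i' ≠ j')
    (h : pairClass x1 x2 i j = pairClass x1 x2 i' j') :
    (i ∈ ({x1, x2} : Set (Fin n)) ∨ i' ∈ ({x1, x2} : Set (Fin n)) → i = i') ∧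
      (j ∈ ({x1, x2} : Set (Fin n)) ∨ j' ∈ ({x1, x2} : Set (Fin n)) → j = j') := by
  unfold pairClass at h
  split_ifs at h <;> grind

lemma exists_perm_of_pairClass_eq {i j i' j' : Fin n} (hij : i ≠ j) (hij' : i' ≠ j')
    (h : pairClass x1 x2 i j = pairClass x1 x2 i' j') :
    ∃ α : Equiv.Perm (Fin n), α x1 = x1 ∧ α x2 = x2 ∧ α i = i' ∧ α j = j' := by
  obtain ⟨hi, hj⟩ := eq_of_mem_of_pairClass_eq hij hij' h
  obtain ⟨α, hfix, hαi, hαj⟩ := exists_perm_fixing_apply_pair hij hij' hi hj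
  exact ⟨α, hfix x1 (by simp), hfix x2 (by simp), hαi, hαj⟩

variable (h12 : x1 ≠ x2)

/-- `stabilizerOrbit h12 k` is the paper's `O_(k+1)`. -/
def stabilizerOrbit : Fin 7 → Set ((Hgraph n).edgeSet) :=
  ![{edgeV x1 x2 h12},
    {e | ∃ i, ∃ hi : i ≠ x1 ∧ i ≠ x2, e = edgeV x1 i (Ne.symm hi.1)},
    {edgeV x2 x1 (Ne.symm h12)},
    {e | ∃ i, ∃ hi : i ≠ x1 ∧ i ≠ x2, e = edgeV x2 i (Ne.symm hi.2)},
    {e | ∃ i, ∃ hi : i ≠ x1 ∧ i ≠ x2, e = edgeV i x1 hi.1},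
    {e | ∃ i, ∃ hi : i ≠ x1 ∧ i ≠ x2, e = edgeV i x2 hi.2},
    {e | ∃ i j, (i ≠ x1 ∧ i ≠ x2 ∧ j ≠ x1 ∧ j ≠ x2) ∧ ∃ hij : i ≠ j, e = edgeV i j hij}]

lemma edgeV_mem_stabilizerOrbit_iff {i j : Fin n} (hij : i ≠ j) (k : Fin 7) :
    edgeV i j hij ∈ stabilizerOrbit h12 k ↔ pairClass x1 x2 i j = k := by
  fin_cases k <;> simp [stabilizerOrbit, edgeV_eq_edgeV_iff, pairClass] <;> grind

lemma iUnion_stabilizerOrbit : ⋃ k, stabilizerOrbit h12 k = Set.univ := by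
  refine Set.eq_univ_of_forall fun e => ?_
  obtain ⟨i, j, hij, rfl⟩ := exists_eq_edgeV e
  exact Set.mem_iUnion.mpr ⟨_, (edgeV_mem_stabilizerOrbit_iff h12 hij _).mpr rfl⟩

lemma stabilizerOrbit_inter_eq_empty {k l : Fin 7} (hkl : k ≠ l) :
    stabilizerOrbit h12 k ∩ stabilizerOrbit h12 l = ∅ := by
  refine Set.eq_empty_of_forall_notMem fun e ⟨hk, hl⟩ => hkl ?_
  obtain ⟨i, j, hij, rfl⟩ := exists_eq_edgeV e
  rw [edgeV_mem_stabilizerOrbit_iff] at hk hl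
  exact hk.symm.trans hl

lemma permEdge_mem_stabilizerOrbit {α : Equiv.Perm (Fin n)} (h1 : α x1 = x1) (h2 : α x2 = x2)
    {k : Fin 7} {e : (Hgraph n).edgeSet} (he : e ∈ stabilizerOrbit h12 k) :
    permEdge α e ∈ stabilizerOrbit h12 k := by
  obtain ⟨i, j, hij, rfl⟩ := exists_eq_edgeV e
  rw [permEdge_edgeV, edgeV_mem_stabilizerOrbit_iff, pairClass_perm_apply x1 x2 h1 h2]
  rwa [edgeV_mem_stabilizerOrbit_iff] at he

lemma exists_permEdge_eq_of_mem_stabilizerOrbit {k : Fin 7} {e e' : (Hgraph n).edgeSet}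
    (he : e ∈ stabilizerOrbit h12 k) (he' : e' ∈ stabilizerOrbit h12 k) :
    ∃ α : Equiv.Perm (Fin n), α x1 = x1 ∧ α x2 = x2 ∧ permEdge α e = e' := by
  obtain ⟨i, j, hij, rfl⟩ := exists_eq_edgeV e
  obtain ⟨i', j', hij', rfl⟩ := exists_eq_edgeV e'
  rw [edgeV_mem_stabilizerOrbit_iff] at he he'
  obtain ⟨α, h1, h2, hi, hj⟩ := exists_perm_of_pairClass_eq hij hij' (he.trans he'.symm)
  exact ⟨α, h1, h2, by rw [permEdge_edgeV, edgeV_eq_edgeV_iff]; exact ⟨hi, hj⟩⟩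

end Orbits

theorem stabilizer_seven_orbits_general (n : ℕ) (x1 x2 : Fin n) (h12 : x1 ≠ x2)
    (O : Fin 7 → Set ((Hgraph n).edgeSet))
    (hO₁ : O 0 = {edgeV x1 x2 h12})
    (hO₂ : O 1 = {e | ∃ i, ∃ hi : i ≠ x1 ∧ i ≠ x2, e = edgeV x1 i (Ne.symm hi.1)})
    (hO₃ : O 2 = {edgeV x2 x1 (Ne.symm h12)})
    (hO₄ : O 3 = {e | ∃ i, ∃ hi : i ≠ x1 ∧ i ≠ x2, e = edgeV x2 i (Ne.symm hi.2)})
    (hO₅ : O 4 = {e | ∃ i, ∃ hi : i ≠ x1 ∧ i ≠ x2, e = edgeV i x1 hi.1})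
    (hO₆ : O 5 = {e | ∃ i, ∃ hi : i ≠ x1 ∧ i ≠ x2, e = edgeV i x2 hi.2})
    (hO₇ : O 6 = {e | ∃ i j, (i ≠ x1 ∧ i ≠ x2 ∧ j ≠ x1 ∧ j ≠ x2) ∧
      ∃ hij : i ≠ j, e = edgeV i j hij}) :
    (⋃ k, O k) = Set.univ ∧
    (∀ k l, k ≠ l → O k ∩ O l = ∅) ∧
    (∀ k, (∀ α : Equiv.Perm (Fin n), α x1 = x1 → α x2 = x2 → ∀ e ∈ O k, permEdge α e ∈ O k) ∧
      (∀ e ∈ O k, ∀ e' ∈ O k,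
        ∃ α : Equiv.Perm (Fin n), α x1 = x1 ∧ α x2 = x2 ∧ permEdge α e = e')) := by
  obtain rfl : O = stabilizerOrbit h12 := by
    funext k
    fin_cases k
    exacts [hO₁, hO₂, hO₃, hO₄, hO₅, hO₆, hO₇]
  exact ⟨iUnion_stabilizerOrbit h12, fun _ _ => stabilizerOrbit_inter_eq_empty h12,
    fun _ => ⟨fun _ h1 h2 _ => permEdge_mem_stabilizerOrbit h12 h1 h2,
      fun _ he _ he' => exists_permEdge_eq_of_mem_stabilizerOrbit h12 he he'⟩⟩

/-- The subgroup of automorphisms of `L(n)` induced by permutations fixing `x1` and `x2` has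
exactly seven orbits on the vertices of `L(n)`, as listed: each of the seven sets is invariant,
the induced action is transitive on each of them, and they partition the vertex set. -/
theorem stabilizer_seven_orbits (n : ℕ) (hn : 5 ≤ n) (x1 x2 : Fin n) (h12 : x1 ≠ x2)
    (O : Fin 7 → Set ((Hgraph n).edgeSet))
    (hO₁ : O 0 = {edgeV x1 x2 h12})
    (hO₂ : O 1 = {e | ∃ i, ∃ hi : i ≠ x1 ∧ i ≠ x2, e = edgeV x1 i (Ne.symm hi.1)})
    (hO₃ : O 2 = {edgeV x2 x1 (Ne.symm h12)})
    (hO₄ : O 3 = {e | ∃ i, ∃ hi : i ≠ x1 ∧ i ≠ x2, e = edgeV x2 i (Ne.symm hi.2)})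
    (hO₅ : O 4 = {e | ∃ i, ∃ hi : i ≠ x1 ∧ i ≠ x2, e = edgeV i x1 hi.1})
    (hO₆ : O 5 = {e | ∃ i, ∃ hi : i ≠ x1 ∧ i ≠ x2, e = edgeV i x2 hi.2})
    (hO₇ : O 6 = {e | ∃ i j, (i ≠ x1 ∧ i ≠ x2 ∧ j ≠ x1 ∧ j ≠ x2) ∧
      ∃ hij : i ≠ j, e = edgeV i j hij}) :
    (⋃ k, O k) = Set.univ ∧
    (∀ k l, k ≠ l → O k ∩ O l = ∅) ∧
    (∀ k, (∀ α : Equiv.Perm (Fin n), α x1 = x1 → α x2 = x2 → ∀ e ∈ O k, permEdge α e ∈ O k) ∧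
      (∀ e ∈ O k, ∀ e' ∈ O k,
        ∃ α : Equiv.Perm (Fin n), α x1 = x1 ∧ α x2 = x2 ∧ permEdge α e = e')) :=
  stabilizer_seven_orbits_general n x1 x2 h12 O hO₁ hO₂ hO₃ hO₄ hO₅ hO₆ hO₇
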